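/- For each ω ∈ Ω let L_ω be a linear operator bounded on both C⁰(𝕋) and C¹(𝕋), and let (h_ω)_{ω∈Ω} ⊆ C⁰(𝕋). Assume: (i) there are β > 1 and C₁ ∈ L^{p₁}(Ω,𝓕,ℙ), p₁ > 0, such that for ℙ-a.e. ω, all j ≥ 1 and all g ∈ C¹(𝕋): ‖L^{j}_{ω} g − (∫ g dm)·h_{σ^{j}ω}‖_∞ ≤ C₁(ω)·j^{−β}·‖g‖_{C¹}; (ii) ‖L_ω 𝟙‖_∞ ≤ E(ω) with E ∈ L^{e₁}(Ω,𝓕,ℙ), e₁ > 0; (iii) there is Q₁ ∈ L^{d₁}(Ω,𝓕,ℙ), d₁ > 0, such that for ℙ-a.e. ω, all j ≥ 1 and all g ∈ C¹(𝕋): ‖(L^{j}_{σ^{−j}ω} g)′‖_∞ ≤ ‖L^{j}_{σ^{−j}ω}𝟙‖_∞ · Q₁(ω) · ‖g‖_{C¹}. Define V(ω) := C₁(σ^{−1}ω) + E(σ^{−1}ω), A(ω) := 1 + C₁(ω) and B(ω) := (1 + V(ω))·(1 + Q₁(ω)). Then for ℙ-a.e. ω, all n ≥ 1 and all 0 ≤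 j ≤ n: ‖L^{j}_{σ^{−n}ω}‖_{C¹→C¹} ≤ A(σ^{−n}ω)·B(σ^{j−n}ω); moreover A ∈ L^{p₁}(Ω,𝓕,ℙ) and B ∈ L^{q′}(Ω,𝓕,ℙ) where 1/q′ = 1/d₁ + 1/min(p₁, e₁). -/

import Mathlib

open MeasureTheory Function

noncomputable section

/-- `C ∈ L^p(Ω,𝓕,ℙ)` for a nonnegative random variable `C`. -/
def MemLpRV {Ω : Type*} [MeasurableSpace Ω] (ℙ : Measure Ω) (p : ℝ) (C : Ω → ℝ) : Prop :=
  Measurable C ∧ (∀ ω, 0 ≤ C ω) ∧ Integrable (fun ω => C ω ^ p) ℙ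

/-- The `C^r` norm of a (1-periodic) function on `ℝ`:
`max_{0 ≤ i ≤ r} sup_x |f^{(i)}(x)|`. -/
def crNorm (r : ℕ) (f : ℝ → ℝ) : ℝ :=
  ⨆ p : Fin (r + 1) × ℝ, |iteratedDeriv (p.1 : ℕ) f p.2|

/-- The transfer operator (with respect to Lebesgue/Haar measure) of the circle map
induced by the lift `T : ℝ → ℝ`, acting on (1-periodic) functions:
`L g (x) = Σ_{y : T y = x} g(y)/|T'(y)|`, the sum running over the preimages of `x`
in a fundamental domain `[0,1)`. -/
def transferOp (T : ℝ → ℝ) (g : ℝ → ℝ) (x : ℝ) : ℝ :=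
  ∑' y : {y : ℝ // y ∈ Set.Ico (0 : ℝ) 1 ∧ ∃ k : ℤ, T y = x + k}, g (y : ℝ) / |deriv T (y : ℝ)|

/-- Iterates of maps along an orbit of `σ`: `T^n_ω = T_{σ^{n-1}ω} ∘ ⋯ ∘ T_ω`. -/
def mapIter {Ω : Type*} (σ : Ω → Ω) (T : Ω → ℝ → ℝ) : ℕ → Ω → ℝ → ℝ
  | 0, _, x => x
  | n + 1, ω, x => mapIter σ T n (σ ω) (T ω x)

/-- Iterates of the transfer operators along an orbit of `σ`:
`L^n_ω = L_{σ^{n-1}ω} ∘ ⋯ ∘ L_ω`. -/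
def transferIter {Ω : Type*} (σ : Ω → Ω) (T : Ω → ℝ → ℝ) : ℕ → Ω → (ℝ → ℝ) → ℝ → ℝ
  | 0, _, g => g
  | n + 1, ω, g => transferIter σ T n (σ ω) (transferOp (T ω) g)

/-- The composition `z_n ∘ z_{n-1} ∘ ⋯ ∘ z_1` (the empty composition is the identity). -/
def compSeq (z : ℕ → ℝ → ℝ) : ℕ → ℝ → ℝ
  | 0, x => x
  | n + 1, x => z (n + 1) (compSeq z n x)

/-- Birkhoff sums `S_n φ (x) = Σ_{j<n} φ_{σ^j ω}(T^j_ω x)` along an orbit of `σ`. -/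
def birkSum {Ω : Type*} (σ : Ω → Ω) (T : Ω → ℝ → ℝ) (φ : Ω → ℝ → ℝ) (n : ℕ) (ω : Ω)
    (x : ℝ) : ℝ :=
  ∑ j ∈ Finset.range n, φ (σ^[j] ω) (mapIter σ T j ω x)

/-- Integral over the circle (one period). -/
def circInt (g : ℝ → ℝ) : ℝ := ∫ x in Set.Ioc (0 : ℝ) 1, g x

/-- Iterates of linear operators on functions along an orbit of `σ`:
`L^n_ω = L_{σ^{n-1}ω} ∘ ⋯ ∘ L_ω`. -/
def iterLin {Ω : Type*} (σ : Ω → Ω) (L : Ω → (ℝ → ℝ) →ₗ[ℝ] (ℝ → ℝ)) :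
    ℕ → Ω → (ℝ → ℝ) →ₗ[ℝ] (ℝ → ℝ)
  | 0, _ => LinearMap.id
  | n + 1, ω => (iterLin σ L n (σ ω)).comp (L ω)

/-! Fix `ω₀ = σ^{-n}ω` and `j ≥ 1`. Applying (i) at `σ^{-1}(σ^j ω₀)` to `g = 𝟙` and using (ii)
shows `‖h_{σ^j ω₀}‖_∞ ≤ V(σ^j ω₀)`, so (i) at `ω₀` gives
`‖L^j_{ω₀} g‖_∞ ≤ (C₁(ω₀) + V(σ^j ω₀)) ‖g‖_{C¹}`. Applied to `g = 𝟙` this bounds the factor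
`‖L^j_{ω₀} 𝟙‖_∞` in (iii) at `σ^j ω₀`, which controls the derivative. The integrability of `B`
is Hölder's inequality. -/

lemma crNorm_nonneg (r : ℕ) (f : ℝ → ℝ) : 0 ≤ crNorm r f :=
  Real.iSup_nonneg fun _ => abs_nonneg _

lemma crNorm_le {r : ℕ} {f : ℝ → ℝ} {K : ℝ} (hK : 0 ≤ K)
    (h : ∀ (i : Fin (r + 1)) (x : ℝ), |iteratedDeriv i f x| ≤ K) : crNorm r f ≤ K :=
  Real.iSup_le (fun p => h p.1 p.2) hK

lemma crNorm_zero_le {f : ℝ → ℝ} {K : ℝ} (h : ∀ x, |f x| ≤ K) : crNorm 0 f ≤ K :=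
  crNorm_le ((abs_nonneg _).trans (h 0)) fun i x => by
    fin_cases i
    simpa using h x

lemma crNorm_one_le {f : ℝ → ℝ} {K : ℝ} (h₀ : ∀ x, |f x| ≤ K) (h₁ : ∀ x, |deriv f x| ≤ K) :
    crNorm 1 f ≤ K :=
  crNorm_le ((abs_nonneg _).trans (h₀ 0)) fun i x => by
    fin_cases i
    · simpa using h₀ x
    · simpa using h₁ x

lemma Function.Periodic.iteratedDeriv {f : ℝ → ℝ} {c : ℝ} (hf : Periodic f c) (n : ℕ) :
    Periodic (iteratedDeriv n f) c := fun x => by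
  have hshift : (fun z => f (z + c)) = f := funext hf
  simpa [hshift] using (congrFun (iteratedDeriv_comp_add_const (f := f) (s := c) (n := n)) x).symm

lemma bddAbove_range_abs_of_periodic {f : ℝ → ℝ} (hf : Continuous f) (hp : Periodic f 1) :
    BddAbove (Set.range fun x => |f x|) := by
  obtain ⟨M, hM⟩ := isBounded_iff_forall_norm_le.1 (hp.isBounded_of_continuous one_ne_zero hf)
  exact ⟨M, by rintro _ ⟨x, rfl⟩; exact hM _ ⟨x, rfl⟩⟩

lemma abs_iteratedDeriv_le_crNorm {r : ℕ} {f : ℝ → ℝ} (hf : ContDiff ℝ r f) (hp : Periodic f 1)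
    {i : ℕ} (hi : i ≤ r) (x : ℝ) : |iteratedDeriv i f x| ≤ crNorm r f := by
  have hbdd (k : Fin (r + 1)) : BddAbove (Set.range fun x => |iteratedDeriv k f x|) :=
    bddAbove_range_abs_of_periodic
      (hf.continuous_iteratedDeriv k (by exact_mod_cast Nat.lt_succ_iff.1 k.isLt))
      (hp.iteratedDeriv k)
  choose M hM using hbdd
  obtain ⟨K, hK⟩ := (Set.finite_range M).bddAbove
  refine le_ciSup (f := fun p : Fin (r + 1) × ℝ => |iteratedDeriv p.1 f p.2|)
    ⟨K, ?_⟩ (⟨i, Nat.lt_succ_of_le hi⟩, x)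
  rintro _ ⟨⟨k, y⟩, rfl⟩
  exact (hM k ⟨y, rfl⟩).trans (hK ⟨k, rfl⟩)

lemma abs_le_crNorm_zero {f : ℝ → ℝ} (hf : Continuous f) (hp : Periodic f 1) (x : ℝ) :
    |f x| ≤ crNorm 0 f := by
  simpa using abs_iteratedDeriv_le_crNorm (contDiff_zero.2 hf) hp le_rfl x

lemma abs_le_crNorm_one {f : ℝ → ℝ} (hf : ContDiff ℝ 1 f) (hp : Periodic f 1) (x : ℝ) :
    |f x| ≤ crNorm 1 f := by
  simpa using abs_iteratedDeriv_le_crNorm (mod_cast hf) hp zero_le_one x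

lemma abs_deriv_le_iSup {f : ℝ → ℝ} (hf : ContDiff ℝ 1 f) (hp : Periodic f 1) (x : ℝ) :
    |deriv f x| ≤ ⨆ y, |deriv f y| := by
  refine le_ciSup (bddAbove_range_abs_of_periodic (hf.continuous_deriv le_rfl) ?_) x
  simpa using hp.iteratedDeriv 1

lemma crNorm_const (r : ℕ) (c : ℝ) : crNorm r (fun _ => c) = |c| := by
  apply le_antisymm
  · refine crNorm_le (abs_nonneg c) fun i x => ?_
    rw [iteratedDeriv_const]
    split_ifs <;> simp
  · simpa using abs_iteratedDeriv_le_crNorm (r := r) contDiff_const (fun _ => rfl) (Nat.zero_le r) 0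

lemma abs_sub_le_crNorm_zero {u w : ℝ → ℝ} (hu : Continuous u) (hup : Periodic u 1)
    (hw : Continuous w) (hwp : Periodic w 1) (x : ℝ) :
    |u x - w x| ≤ crNorm 0 (fun y => u y - w y) :=
  abs_le_crNorm_zero (hu.sub hw) (hup.sub hwp) x

lemma abs_integral_Ioc_le_crNorm_one {g : ℝ → ℝ} (hg : ContDiff ℝ 1 g) (hp : Periodic g 1) :
    |∫ t in Set.Ioc (0 : ℝ) 1, g t| ≤ crNorm 1 g := by
  have := norm_setIntegral_le_of_norm_le_const (μ := volume) (s := Set.Ioc (0 : ℝ) 1)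
    (by simp) fun x _ => (Real.norm_eq_abs (g x)).trans_le (abs_le_crNorm_one hg hp x)
  simpa [Real.volume_real_Ioc] using this

lemma iterLin_one {Ω : Type*} (σ : Ω → Ω) (L : Ω → (ℝ → ℝ) →ₗ[ℝ] (ℝ → ℝ)) (ω : Ω) :
    iterLin σ L 1 ω = L ω :=
  rfl

lemma iterLin_preserves {Ω : Type*} {σ : Ω → Ω} {L : Ω → (ℝ → ℝ) →ₗ[ℝ] (ℝ → ℝ)}
    {P : (ℝ → ℝ) → Prop} (hL : ∀ ω g, P g → P (L ω g)) (n : ℕ) (ω : Ω) {g : ℝ → ℝ}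
    (hg : P g) : P (iterLin σ L n ω g) := by
  induction n generalizing ω g with
  | zero => exact hg
  | succ n ih => exact ih (σ ω) (hL ω g hg)

section Approximation

/- `T` stands for `L^j_ω` and `h₀` for `h_{σ^j ω}`. -/
variable {T : (ℝ → ℝ) → ℝ → ℝ} {h₀ : ℝ → ℝ} {a V Q : ℝ}

lemma abs_apply_le_of_approx
    (hT : ∀ g, ContDiff ℝ 1 g → Periodic g 1 → ContDiff ℝ 1 (T g) ∧ Periodic (T g) 1)
    (hh₀ : Continuous h₀) (hh₀p : Periodic h₀ 1) (hV : ∀ x, |h₀ x| ≤ V)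
    (happrox : ∀ g, ContDiff ℝ 1 g → Periodic g 1 →
      crNorm 0 (fun x => T g x - (∫ t in Set.Ioc (0 : ℝ) 1, g t) * h₀ x) ≤ a * crNorm 1 g)
    {g : ℝ → ℝ} (hg : ContDiff ℝ 1 g) (hgp : Periodic g 1) (x : ℝ) :
    |T g x| ≤ (a + V) * crNorm 1 g := by
  set c := ∫ t in Set.Ioc (0 : ℝ) 1, g t
  have hTg := hT g hg hgp
  have hclose : |T g x - c * h₀ x| ≤ a * crNorm 1 g :=
    (abs_sub_le_crNorm_zero hTg.1.continuous hTg.2 (continuous_const.mul hh₀)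
      (Periodic.mul (fun _ => rfl) hh₀p) x).trans (happrox g hg hgp)
  have hmain : |c * h₀ x| ≤ crNorm 1 g * V := by
    rw [abs_mul]
    exact mul_le_mul (abs_integral_Ioc_le_crNorm_one hg hgp) (hV x) (abs_nonneg _)
      (crNorm_nonneg 1 g)
  calc |T g x| ≤ |T g x - c * h₀ x| + |c * h₀ x| := by
        linarith [abs_sub_abs_le_abs_sub (T g x) (c * h₀ x)]
    _ ≤ a * crNorm 1 g + crNorm 1 g * V := add_le_add hclose hmain
    _ = (a + V) * crNorm 1 g := by ring

lemma crNorm_zero_apply_one_le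
    (hT : ∀ g, ContDiff ℝ 1 g → Periodic g 1 → ContDiff ℝ 1 (T g) ∧ Periodic (T g) 1)
    (hh₀ : Continuous h₀) (hh₀p : Periodic h₀ 1) (hV : ∀ x, |h₀ x| ≤ V)
    (happrox : ∀ g, ContDiff ℝ 1 g → Periodic g 1 →
      crNorm 0 (fun x => T g x - (∫ t in Set.Ioc (0 : ℝ) 1, g t) * h₀ x) ≤ a * crNorm 1 g) :
    crNorm 0 (T fun _ => 1) ≤ a + V :=
  crNorm_zero_le fun x => by
    simpa [crNorm_const] using
      abs_apply_le_of_approx hT hh₀ hh₀p hV happrox (g := fun _ => 1) contDiff_const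
        (fun _ => rfl) x

lemma crNorm_one_apply_le_of_approx
    (hT : ∀ g, ContDiff ℝ 1 g → Periodic g 1 → ContDiff ℝ 1 (T g) ∧ Periodic (T g) 1)
    (hh₀ : Continuous h₀) (hh₀p : Periodic h₀ 1) (hV : ∀ x, |h₀ x| ≤ V)
    (happrox : ∀ g, ContDiff ℝ 1 g → Periodic g 1 →
      crNorm 0 (fun x => T g x - (∫ t in Set.Ioc (0 : ℝ) 1, g t) * h₀ x) ≤ a * crNorm 1 g)
    (hQ : 0 ≤ Q) (hderiv : ∀ g, ContDiff ℝ 1 g → Periodic g 1 →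
      (⨆ x, |deriv (T g) x|) ≤ crNorm 0 (T fun _ => 1) * Q * crNorm 1 g)
    {g : ℝ → ℝ} (hg : ContDiff ℝ 1 g) (hgp : Periodic g 1) :
    crNorm 1 (T g) ≤ (a + V) * (1 + Q) * crNorm 1 g := by
  have hTg := hT g hg hgp
  have hN := crNorm_nonneg 1 g
  have hT1 := crNorm_zero_apply_one_le hT hh₀ hh₀p hV happrox
  have haV : 0 ≤ a + V := (crNorm_nonneg 0 _).trans hT1
  apply crNorm_one_le
  · intro x
    calc |T g x| ≤ (a + V) * crNorm 1 g := abs_apply_le_of_approx hT hh₀ hh₀p hV happrox hg hgp x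
      _ ≤ (a + V) * (1 + Q) * crNorm 1 g := by nlinarith [mul_nonneg (mul_nonneg haV hQ) hN]
  · intro x
    calc |deriv (T g) x| ≤ ⨆ y, |deriv (T g) y| := abs_deriv_le_iSup hTg.1 hTg.2 x
      _ ≤ crNorm 0 (T fun _ => 1) * Q * crNorm 1 g := hderiv g hg hgp
      _ ≤ (a + V) * Q * crNorm 1 g := by gcongr
      _ ≤ (a + V) * (1 + Q) * crNorm 1 g := by gcongr; linarith

end Approximation

section Orbit

variable {Ω : Type*} (σ σinv : Ω → Ω) (L : Ω → (ℝ → ℝ) →ₗ[ℝ] (ℝ → ℝ)) (h : Ω → ℝ → ℝ)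

/-- Hypothesis (i) at the point `ω`. -/
def QuenchedDecayAt (β : ℝ) (C : Ω → ℝ) (ω : Ω) : Prop :=
  ∀ j : ℕ, 1 ≤ j → ∀ g : ℝ → ℝ, ContDiff ℝ 1 g → Periodic g 1 →
    crNorm 0 (fun x => iterLin σ L j ω g x - (∫ t in Set.Ioc (0 : ℝ) 1, g t) * h (σ^[j] ω) x) ≤
      C ω * (j : ℝ) ^ (-β) * crNorm 1 g

/-- Hypothesis (iii) at the point `ω`. -/
def DerivControlAt (Q : Ω → ℝ) (ω : Ω) : Prop :=
  ∀ j : ℕ, 1 ≤ j → ∀ g : ℝ → ℝ, ContDiff ℝ 1 g → Periodic g 1 →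
    (⨆ x : ℝ, |deriv (iterLin σ L j (σinv^[j] ω) g) x|) ≤
      crNorm 0 (iterLin σ L j (σinv^[j] ω) (fun _ => 1)) * Q ω * crNorm 1 g

variable {σ σinv L h}

lemma abs_le_of_quenchedDecayAt
    (hL : ∀ ω g, ContDiff ℝ 1 g → Periodic g 1 → ContDiff ℝ 1 (L ω g) ∧ Periodic (L ω g) 1)
    (hh : ∀ ω, Continuous (h ω) ∧ Periodic (h ω) 1) {β : ℝ} {C : Ω → ℝ} {ω : Ω} {E : ℝ}
    (hi : QuenchedDecayAt σ L h β C ω) (hE : crNorm 0 (L ω fun _ => 1) ≤ E) (x : ℝ) :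
    |h (σ ω) x| ≤ C ω + E := by
  have hL1 := hL ω (fun _ => 1) contDiff_const fun _ => rfl
  have hclose : crNorm 0 (fun x => L ω (fun _ => 1) x - h (σ ω) x) ≤ C ω := by
    simpa [crNorm_const, iterLin_one] using hi 1 le_rfl (fun _ => 1) contDiff_const fun _ => rfl
  have h₁ := abs_sub_le_crNorm_zero hL1.1.continuous hL1.2 (hh (σ ω)).1 (hh (σ ω)).2 x
  have h₂ := abs_le_crNorm_zero hL1.1.continuous hL1.2 x
  linarith [abs_sub_abs_le_abs_sub (h (σ ω) x) (L ω (fun _ => 1) x),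
    abs_sub_comm (h (σ ω) x) (L ω (fun _ => 1) x)]

lemma crNorm_iterLin_le
    (hL : ∀ ω g, ContDiff ℝ 1 g → Periodic g 1 → ContDiff ℝ 1 (L ω g) ∧ Periodic (L ω g) 1)
    (hh : ∀ ω, Continuous (h ω) ∧ Periodic (h ω) 1) {β : ℝ} (hβ : 0 ≤ β) {C E Q : Ω → ℝ}
    {ω₀ ωj ω' : Ω} {j : ℕ} (hj : 1 ≤ j) (hC : 0 ≤ C ω₀) (hQ : 0 ≤ Q ωj)
    (hσ' : σ ω' = ωj) (hfwd : σ^[j] ω₀ = ωj) (hback : σinv^[j] ωj = ω₀)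
    (hi₀ : QuenchedDecayAt σ L h β C ω₀) (hi' : QuenchedDecayAt σ L h β C ω')
    (hE' : crNorm 0 (L ω' fun _ => 1) ≤ E ω') (hiii : DerivControlAt σ σinv L Q ωj)
    {g : ℝ → ℝ} (hg : ContDiff ℝ 1 g) (hgp : Periodic g 1) :
    crNorm 1 (iterLin σ L j ω₀ g) ≤ (C ω₀ + (C ω' + E ω')) * (1 + Q ωj) * crNorm 1 g := by
  subst hσ'
  have hdecay : C ω₀ * (j : ℝ) ^ (-β) ≤ C ω₀ :=
    mul_le_of_le_one_right hC
      (Real.rpow_le_one_of_one_le_of_nonpos (by exact_mod_cast hj) (by linarith))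
  refine (crNorm_one_apply_le_of_approx (T := iterLin σ L j ω₀)
    (fun g hg hgp => iterLin_preserves (P := fun g => ContDiff ℝ 1 g ∧ Periodic g 1) (fun ω g hg => hL ω g hg.1 hg.2) j ω₀ ⟨hg, hgp⟩)
    (hh _).1 (hh _).2 (abs_le_of_quenchedDecayAt hL hh hi' hE')
    (fun g hg hgp => by simpa only [hfwd] using hi₀ j hj g hg hgp) hQ
    (fun g hg hgp => by simpa only [hback] using hiii j hj g hg hgp) hg hgp).trans ?_
  have := crNorm_nonneg 1 g
  gcongr

end Orbit

section MemLpRV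

variable {Ω : Type*} [MeasurableSpace Ω] {ℙ : Measure Ω} {p q r : ℝ} {f g : Ω → ℝ}

lemma memLpRV_iff (hp : 0 < p) :
    MemLpRV ℙ p f ↔ Measurable f ∧ (∀ ω, 0 ≤ f ω) ∧ MemLp f (ENNReal.ofReal p) ℙ := by
  refine and_congr_right fun hf => and_congr_right fun hf₀ => ?_
  rw [← integrable_norm_rpow_iff hf.aestronglyMeasurable (by simpa using hp)
    ENNReal.ofReal_ne_top, ENNReal.toReal_ofReal hp.le]
  simp only [Real.norm_eq_abs, abs_of_nonneg (hf₀ _)]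

lemma MemLpRV.comp_measurePreserving {Ω' : Type*} [MeasurableSpace Ω'] {μ : Measure Ω'}
    {τ : Ω' → Ω} (hf : MemLpRV ℙ p f) (hτ : MeasurePreserving τ μ ℙ) :
    MemLpRV μ p (fun ω => f (τ ω)) :=
  ⟨hf.1.comp hτ.measurable, fun ω => hf.2.1 (τ ω),
    (hτ.integrable_comp (hf.1.pow_const p).aestronglyMeasurable).2 hf.2.2⟩

lemma MemLpRV.add (hp : 0 < p) (hf : MemLpRV ℙ p f) (hg : MemLpRV ℙ p g) :
    MemLpRV ℙ p (fun ω => f ω + g ω) := by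
  rw [memLpRV_iff hp] at hf hg ⊢
  exact ⟨hf.1.add hg.1, fun ω => add_nonneg (hf.2.1 ω) (hg.2.1 ω), hf.2.2.add hg.2.2⟩

lemma MemLpRV.one_add [IsFiniteMeasure ℙ] (hp : 0 < p) (hf : MemLpRV ℙ p f) :
    MemLpRV ℙ p (fun ω => 1 + f ω) := by
  rw [memLpRV_iff hp] at hf ⊢
  exact ⟨measurable_const.add hf.1, fun ω => by linarith [hf.2.1 ω],
    (memLp_const (1 : ℝ)).add hf.2.2⟩

lemma MemLpRV.mono_exponent [IsFiniteMeasure ℙ] (hq : 0 < q) (hqp : q ≤ p)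
    (hf : MemLpRV ℙ p f) : MemLpRV ℙ q f := by
  rw [memLpRV_iff (hq.trans_le hqp)] at hf
  rw [memLpRV_iff hq]
  exact ⟨hf.1, hf.2.1, hf.2.2.mono_exponent (ENNReal.ofReal_le_ofReal hqp)⟩

lemma MemLpRV.mul (hp : 0 < p) (hq : 0 < q) (hr : 1 / r = 1 / p + 1 / q)
    (hf : MemLpRV ℙ p f) (hg : MemLpRV ℙ q g) : MemLpRV ℙ r (fun ω => f ω * g ω) := by
  have hr₀ : 0 < r := one_div_pos.1 (hr ▸ by positivity)
  have : ENNReal.HolderTriple (ENNReal.ofReal p) (ENNReal.ofReal q) (ENNReal.ofReal r) := by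
    refine ⟨?_⟩
    rw [← ENNReal.ofReal_inv_of_pos hp, ← ENNReal.ofReal_inv_of_pos hq,
      ← ENNReal.ofReal_inv_of_pos hr₀, ← ENNReal.ofReal_add (by positivity) (by positivity)]
    simp only [one_div] at hr
    rw [hr]
  rw [memLpRV_iff hp] at hf
  rw [memLpRV_iff hq] at hg
  rw [memLpRV_iff hr₀]
  exact ⟨hf.1.mul hg.1, fun ω => mul_nonneg (hf.2.1 ω) (hg.2.1 ω), hg.2.2.mul' hf.2.2⟩

end MemLpRV

lemma MeasureTheory.MeasurePreserving.inverse {α β : Type*} [MeasurableSpace α]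
    [MeasurableSpace β] {μ : Measure α} {ν : Measure β} {f : α → β} {g : β → α}
    (hf : MeasurePreserving f μ ν) (hg : Measurable g) (h₁ : LeftInverse g f)
    (h₂ : RightInverse g f) : MeasurePreserving g ν μ :=
  MeasurePreserving.symm ⟨⟨f, g, h₁, h₂⟩, hf.measurable, hg⟩ hf

lemma MeasureTheory.MeasurePreserving.ae_forall_iterate {α : Type*} [MeasurableSpace α]
    {μ : Measure α} {τ : α → α} (hτ : MeasurePreserving τ μ μ) {P : α → Prop}
    (hP : ∀ᵐ x ∂μ, P x) : ∀ᵐ x ∂μ, ∀ k, P (τ^[k] x) :=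
  ae_all_iff.2 fun k => (hτ.iterate k).quasiMeasurePreserving.ae hP

lemma one_le_one_add_mul_one_add_mul_one_add {a b c : ℝ} (ha : 0 ≤ a) (hb : 0 ≤ b)
    (hc : 0 ≤ c) : 1 ≤ (1 + a) * ((1 + b) * (1 + c)) := by
  nlinarith [mul_nonneg ha hb, mul_nonneg hb hc, mul_nonneg ha hc,
    mul_nonneg (mul_nonneg ha hb) hc]

lemma add_mul_one_add_le {a b c : ℝ} (ha : 0 ≤ a) (hb : 0 ≤ b) (hc : 0 ≤ c) :
    (a + b) * (1 + c) ≤ (1 + a) * ((1 + b) * (1 + c)) := by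
  nlinarith [mul_nonneg ha hb, mul_nonneg hb hc, mul_nonneg ha hc,
    mul_nonneg (mul_nonneg ha hb) hc]

theorem stmt_17_general
    {Ω : Type*} [MeasurableSpace Ω] (ℙ : Measure Ω) [IsProbabilityMeasure ℙ]
    (σ σinv : Ω → Ω)
    (hσ : MeasurePreserving σ ℙ ℙ) (hσinv : Measurable σinv)
    (hinv₁ : Function.LeftInverse σinv σ) (hinv₂ : Function.RightInverse σinv σ)
    -- the operators L_ω, bounded (linear) on C⁰(𝕋) and C¹(𝕋)
    (L : Ω → (ℝ → ℝ) →ₗ[ℝ] (ℝ → ℝ))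
    (hLpres1 : ∀ ω : Ω, ∀ g : ℝ → ℝ, ContDiff ℝ 1 g → Periodic g 1 →
      ContDiff ℝ 1 (L ω g) ∧ Periodic (L ω g) 1)
    -- the family (h_ω) ⊆ C⁰(𝕋)
    (h : Ω → ℝ → ℝ)
    (hhC0 : ∀ ω : Ω, Continuous (h ω) ∧ Periodic (h ω) 1)
    -- (i)
    (β p₁ : ℝ) (hβ : 1 < β) (hp₁ : 0 < p₁)
    (C1 : Ω → ℝ) (hC1 : MemLpRV ℙ p₁ C1)
    (hi : ∀ᵐ ω ∂ℙ, ∀ j : ℕ, 1 ≤ j →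
      ∀ g : ℝ → ℝ, ContDiff ℝ 1 g → Periodic g 1 →
        crNorm 0 (fun x =>
            iterLin σ L j ω g x - (∫ t in Set.Ioc (0 : ℝ) 1, g t) * h (σ^[j] ω) x) ≤
          C1 ω * (j : ℝ) ^ (-β) * crNorm 1 g)
    -- (ii)
    (e₁ : ℝ) (he₁ : 0 < e₁) (E : Ω → ℝ) (hE : MemLpRV ℙ e₁ E)
    (hEbd : ∀ᵐ ω ∂ℙ, crNorm 0 (L ω (fun _ => 1)) ≤ E ω)
    -- (iii)
    (d₁ : ℝ) (hd₁ : 0 < d₁) (Q1 : Ω → ℝ) (hQ1 : MemLpRV ℙ d₁ Q1)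
    (hiii : ∀ᵐ ω ∂ℙ, ∀ j : ℕ, 1 ≤ j →
      ∀ g : ℝ → ℝ, ContDiff ℝ 1 g → Periodic g 1 →
        (⨆ x : ℝ, |deriv (iterLin σ L j (σinv^[j] ω) g) x|) ≤
          crNorm 0 (iterLin σ L j (σinv^[j] ω) (fun _ => 1)) * Q1 ω * crNorm 1 g)
    (q' : ℝ) (hq' : 1 / q' = 1 / d₁ + 1 / min p₁ e₁) :
    (∀ᵐ ω ∂ℙ, ∀ n : ℕ, 1 ≤ n → ∀ j ≤ n,
      ∀ g : ℝ → ℝ, ContDiff ℝ 1 g → Periodic g 1 →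
        crNorm 1 (iterLin σ L j (σinv^[n] ω) g) ≤
          (1 + C1 (σinv^[n] ω)) *
            ((1 + (C1 (σinv (σinv^[n - j] ω)) + E (σinv (σinv^[n - j] ω)))) *
              (1 + Q1 (σinv^[n - j] ω))) * crNorm 1 g) ∧
      MemLpRV ℙ p₁ (fun ω => 1 + C1 ω) ∧
      MemLpRV ℙ q'
        (fun ω => (1 + (C1 (σinv ω) + E (σinv ω))) * (1 + Q1 ω)) := by
  have hσinv' : MeasurePreserving σinv ℙ ℙ := hσ.inverse hσinv hinv₁ hinv₂
  have hm : 0 < min p₁ e₁ := lt_min hp₁ he₁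
  refine ⟨?_, hC1.one_add hp₁, ?_⟩
  · filter_upwards [hσinv'.ae_forall_iterate hi, hσinv'.ae_forall_iterate hEbd,
      hσinv'.ae_forall_iterate hiii] with ω hiω hEω hiiiω n _ j hjn g hg hgp
    obtain rfl | hj := j.eq_zero_or_pos
    · exact le_mul_of_one_le_left (crNorm_nonneg 1 g)
        (one_le_one_add_mul_one_add_mul_one_add (hC1.2.1 _)
          (add_nonneg (hC1.2.1 _) (hE.2.1 _)) (hQ1.2.1 _))
    have hback : σinv^[j] (σinv^[n - j] ω) = σinv^[n] ω := by
      rw [← iterate_add_apply]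
      congr 1
      omega
    have hpred (k : ℕ) : σinv^[k + 1] ω = σinv (σinv^[k] ω) := iterate_succ_apply' σinv k ω
    refine (crNorm_iterLin_le (fun ω => hLpres1 ω) hhC0 (by linarith) hj (hC1.2.1 _)
      (hQ1.2.1 _) (hinv₂ _) (by rw [← hback]; exact hinv₂.iterate j _) hback (hiω n)
      (hpred (n - j) ▸ hiω (n - j + 1)) (hpred (n - j) ▸ hEω (n - j + 1)) (hiiiω (n - j))
      hg hgp).trans ?_
    exact mul_le_mul_of_nonneg_right (add_mul_one_add_le (hC1.2.1 _)
      (add_nonneg (hC1.2.1 _) (hE.2.1 _)) (hQ1.2.1 _)) (crNorm_nonneg 1 g)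
  · have hV : MemLpRV ℙ (min p₁ e₁) (fun ω => C1 ω + E ω) :=
      (hC1.mono_exponent hm (min_le_left _ _)).add hm (hE.mono_exponent hm (min_le_right _ _))
    exact ((hV.comp_measurePreserving hσinv').one_add hm).mul hm hd₁ (by rw [hq', add_comm])
      (hQ1.one_add hd₁)

theorem stmt_17
    {Ω : Type*} [MeasurableSpace Ω] (ℙ : Measure Ω) [IsProbabilityMeasure ℙ]
    (σ σinv : Ω → Ω)
    (hσ : MeasurePreserving σ ℙ ℙ) (hσinv : Measurable σinv)
    (hinv₁ : Function.LeftInverse σinv σ) (hinv₂ : Function.RightInverse σinv σ)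
    -- the operators L_ω, bounded (linear) on C⁰(𝕋) and C¹(𝕋)
    (L : Ω → (ℝ → ℝ) →ₗ[ℝ] (ℝ → ℝ))
    (hLpres0 : ∀ ω : Ω, ∀ g : ℝ → ℝ, Continuous g → Periodic g 1 →
      Continuous (L ω g) ∧ Periodic (L ω g) 1)
    (hLpres1 : ∀ ω : Ω, ∀ g : ℝ → ℝ, ContDiff ℝ 1 g → Periodic g 1 →
      ContDiff ℝ 1 (L ω g) ∧ Periodic (L ω g) 1)
    (hLbdd0 : ∀ ω : Ω, ∃ Kb : ℝ, ∀ g : ℝ → ℝ, Continuous g → Periodic g 1 →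
      crNorm 0 (L ω g) ≤ Kb * crNorm 0 g)
    (hLbdd1 : ∀ ω : Ω, ∃ Kb : ℝ, ∀ g : ℝ → ℝ, ContDiff ℝ 1 g → Periodic g 1 →
      crNorm 1 (L ω g) ≤ Kb * crNorm 1 g)
    -- the family (h_ω) ⊆ C⁰(𝕋)
    (h : Ω → ℝ → ℝ)
    (hhC0 : ∀ ω : Ω, Continuous (h ω) ∧ Periodic (h ω) 1)
    -- (i)
    (β p₁ : ℝ) (hβ : 1 < β) (hp₁ : 0 < p₁)
    (C1 : Ω → ℝ) (hC1 : MemLpRV ℙ p₁ C1)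
    (hi : ∀ᵐ ω ∂ℙ, ∀ j : ℕ, 1 ≤ j →
      ∀ g : ℝ → ℝ, ContDiff ℝ 1 g → Periodic g 1 →
        crNorm 0 (fun x =>
            iterLin σ L j ω g x - (∫ t in Set.Ioc (0 : ℝ) 1, g t) * h (σ^[j] ω) x) ≤
          C1 ω * (j : ℝ) ^ (-β) * crNorm 1 g)
    -- (ii)
    (e₁ : ℝ) (he₁ : 0 < e₁) (E : Ω → ℝ) (hE : MemLpRV ℙ e₁ E)
    (hEbd : ∀ᵐ ω ∂ℙ, crNorm 0 (L ω (fun _ => 1)) ≤ E ω)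
    -- (iii)
    (d₁ : ℝ) (hd₁ : 0 < d₁) (Q1 : Ω → ℝ) (hQ1 : MemLpRV ℙ d₁ Q1)
    (hiii : ∀ᵐ ω ∂ℙ, ∀ j : ℕ, 1 ≤ j →
      ∀ g : ℝ → ℝ, ContDiff ℝ 1 g → Periodic g 1 →
        (⨆ x : ℝ, |deriv (iterLin σ L j (σinv^[j] ω) g) x|) ≤
          crNorm 0 (iterLin σ L j (σinv^[j] ω) (fun _ => 1)) * Q1 ω * crNorm 1 g)
    (q' : ℝ) (hq' : 1 / q' = 1 / d₁ + 1 / min p₁ e₁) :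
    (∀ᵐ ω ∂ℙ, ∀ n : ℕ, 1 ≤ n → ∀ j ≤ n,
      ∀ g : ℝ → ℝ, ContDiff ℝ 1 g → Periodic g 1 →
        crNorm 1 (iterLin σ L j (σinv^[n] ω) g) ≤
          (1 + C1 (σinv^[n] ω)) *
            ((1 + (C1 (σinv (σinv^[n - j] ω)) + E (σinv (σinv^[n - j] ω)))) *
              (1 + Q1 (σinv^[n - j] ω))) * crNorm 1 g) ∧
      MemLpRV ℙ p₁ (fun ω => 1 + C1 ω) ∧
      MemLpRV ℙ q'
        (fun ω => (1 + (C1 (σinv ω) + E (σinv ω))) * (1 + Q1 ω)) :=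
  stmt_17_general ℙ σ σinv hσ hσinv hinv₁ hinv₂ L hLpres1 h hhC0 β p₁ hβ hp₁ C1 hC1 hi e₁ he₁ E hE
    hEbd d₁ hd₁ Q1 hQ1 hiii q' hq'
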